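/- arXiv:2402.15495 — 2 statements merged into one kernel-verified Lean document; each statement's English description precedes it below -/
import Mathlib

section
/- Let K be a field, Λ a basic finite-dimensional K-algebra and Λ̃ = Λ ⊗_K K[ε]/(ε²). The induction functor − ⊗_Λ Λ̃ from finitely generated Λ-modules to Λ̃-modules is exact, and if I is an injective Λ-module then the induced module I ⊗_Λ Λ̃ is an injective Λ̃-module; moreover, if I is an indecomposable injective Λ-module then I ⊗_Λ Λ̃ is an indecomposable injective Λ̃-module. -/
/-!
As a `Λ`-module `M̃ = M ⊕ Mε`, so induction is exact componentwise. A `Λ̃`-linear map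
`g : Y → M̃` is determined by its `ε`-component, which is merely `Λ`-linear (the other component
is `y ↦ (g (ε • y)).2`); hence `Hom_Λ̃(Y, M̃) ≃ Hom_Λ(Y, M)` naturally in `Y`, i.e. induction is
right adjoint to the exact restriction functor and so preserves injectives. Reducing an
endomorphism of `M̃` modulo `ε` is a ring map to `End_Λ(M)` whose kernel consists of square-zero
elements, so idempotents of `End(M̃)` are trivial as soon as those of `End_Λ(M)` are.
-/

open TrivSqZeroExt

/-- The induced module `M ⊗_Λ Λ̃` over the dual numbers `Λ̃ = Λ ⊗_K K[ε]/(ε²)`,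
realized concretely: `(m₁, m₂)` corresponds to `m₁ ⊗ 1 + m₂ ⊗ ε`. -/
def Induced (Λ : Type*) [Ring Λ] (M : Type*) [AddCommGroup M] [Module Λ M] := M × M

namespace Induced

variable {Λ : Type*} [Ring Λ] {M N : Type*} [AddCommGroup M] [Module Λ M]
  [AddCommGroup N] [Module Λ N]

instance : AddCommGroup (Induced Λ M) := inferInstanceAs (AddCommGroup (M × M))

instance : SMul (DualNumber Λ) (Induced Λ M) :=
  ⟨fun a m => (a.fst • m.1, a.snd • m.1 + a.fst • m.2)⟩

@[simp] lemma smul_def (a : DualNumber Λ) (m : Induced Λ M) :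
    a • m = ((a.fst • m.1, a.snd • m.1 + a.fst • m.2) : M × M) := rfl

@[simp] lemma fst_add' (x y : Induced Λ M) : (x + y).1 = x.1 + y.1 := rfl
@[simp] lemma snd_add' (x y : Induced Λ M) : (x + y).2 = x.2 + y.2 := rfl

instance : Module (DualNumber Λ) (Induced Λ M) :=
  Module.ofMinimalAxioms
    (fun r x y => by
      show (_, _) = ((_, _) + (_, _) : M × M)
      simp [Prod.ext_iff, smul_add, Prod.fst_add, Prod.snd_add]
      exact ⟨rfl, add_add_add_comm _ _ _ _⟩)
    (fun r s x => by
      show (_, _) = ((_, _) + (_, _) : M × M)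
      simp [Prod.ext_iff, add_smul, TrivSqZeroExt.fst_add, TrivSqZeroExt.snd_add]
      exact ⟨rfl, add_add_add_comm _ _ _ _⟩)
    (fun r s x => by
      show (_, _) = (_, _)
      simp [Prod.ext_iff, TrivSqZeroExt.fst_mul, TrivSqZeroExt.snd_mul, mul_smul,
        smul_eq_mul, op_smul_eq_mul, add_smul, smul_add]
      abel)
    (fun x => by
      show (_, _) = _
      simp
      rfl)

/-- The map induced on `M ⊗_Λ Λ̃` by a `Λ`-linear map. -/
def map (f : M →ₗ[Λ] N) : Induced Λ M →ₗ[DualNumber Λ] Induced Λ N where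
  toFun m := (f m.1, f m.2)
  map_add' x y := by
    show ((_,_) : N × N) = (_,_)
    simp [Prod.ext_iff, Prod.fst_add, Prod.snd_add]
  map_smul' a x := by
    show ((_,_) : N × N) = (_,_)
    simp [Prod.ext_iff]

end Induced

/-- A module is indecomposable if it is nonzero and admits no nontrivial direct sum
decomposition. -/
def IsIndecomposableModule (R : Type*) [Ring R] (M : Type*) [AddCommGroup M] [Module R M] :
    Prop :=
  Nontrivial M ∧ ∀ N N' : Submodule R M, IsCompl N N' → N = ⊥ ∨ N' = ⊥

open DualNumber

theorem Function.Exact.prodMap {A₁ A₂ B₁ B₂ C₁ C₂ : Type*} [Zero C₁] [Zero C₂]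
    {f₁ : A₁ → B₁} {g₁ : B₁ → C₁} {f₂ : A₂ → B₂} {g₂ : B₂ → C₂}
    (h₁ : Function.Exact f₁ g₁) (h₂ : Function.Exact f₂ g₂) :
    Function.Exact (Prod.map f₁ f₂) (Prod.map g₁ g₂) := fun y => by
  simp only [Prod.map, Prod.mk_eq_zero, h₁ y.1, h₂ y.2, Set.range_prodMap, Set.mem_prod]

theorem IsIdempotentElem.eq_zero_or_one_of_map {R S : Type*} [Ring R] [Ring S] (φ : R →+* S)
    (hφ : ∀ x, φ x = 0 → x * x = 0) {e : R} (he : IsIdempotentElem e)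
    (h : φ e = 0 ∨ φ e = 1) : e = 0 ∨ e = 1 := by
  rcases h with h | h
  · exact Or.inl (he.eq.symm.trans (hφ e h))
  · have h₁ : φ (1 - e) = 0 := by rw [map_sub, map_one, h, sub_self]
    exact Or.inr (sub_eq_zero.mp (he.one_sub.eq.symm.trans (hφ _ h₁))).symm

theorem isIndecomposableModule_iff (R : Type*) [Ring R] (M : Type*) [AddCommGroup M]
    [Module R M] : IsIndecomposableModule R M ↔
      Nontrivial M ∧ ∀ e : Module.End R M, IsIdempotentElem e → e = 0 ∨ e = 1 := by
  refine and_congr_right fun _ => ⟨fun h e he => ?_, fun h N N' hNN' => ?_⟩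
  · refine (h _ _ (LinearMap.IsIdempotentElem.isCompl he)).imp LinearMap.range_eq_bot.mp
      fun hker => ?_
    ext x
    exact LinearMap.ker_eq_bot.mp hker (LinearMap.congr_fun he.eq x)
  · refine (h _ (Submodule.isIdempotentElem_projection hNN')).imp (fun h₀ => ?_) fun h₁ => ?_
    · rw [← Submodule.range_projection hNN', h₀, LinearMap.range_zero]
    · rw [← Submodule.ker_projection hNN', h₁, Module.End.one_eq_id, LinearMap.ker_id]

section ScalarTower

variable {Λ : Type*} [Ring Λ] {Y : Type*} [AddCommGroup Y] [Module (DualNumber Λ) Y]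
  [Module Λ Y] [IsScalarTower Λ (DualNumber Λ) Y]

theorem DualNumber.inl_smul_eq (r : Λ) (y : Y) : (inl r : DualNumber Λ) • y = r • y := by
  rw [← smul_one_smul (DualNumber Λ) r y, ← inl_mul_eq_smul, mul_one]

theorem DualNumber.smul_eq_fst_smul_add_snd_smul_eps (a : DualNumber Λ) (y : Y) :
    a • y = a.fst • y + a.snd • (ε : DualNumber Λ) • y := by
  rw [← inl_smul_eq a.fst, ← inl_smul_eq a.snd, ← mul_smul, inl_mul_eq_smul, ← inr_eq_smul_eps,
    ← add_smul, inl_fst_add_inr_snd_eq]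

theorem DualNumber.eps_smul_smul (r : Λ) (y : Y) :
    (ε : DualNumber Λ) • r • y = r • (ε : DualNumber Λ) • y := by
  rw [← inl_smul_eq r, ← inl_smul_eq r, ← mul_smul, ← mul_smul, (commute_eps_left _).eq]

end ScalarTower

theorem DualNumber.isScalarTower_compHom_inl (Λ : Type*) [Ring Λ] (Y : Type*) [AddCommGroup Y]
    [Module (DualNumber Λ) Y] :
    letI := Module.compHom Y (inlHom Λ Λ)
    IsScalarTower Λ (DualNumber Λ) Y :=
  letI := Module.compHom Y (inlHom Λ Λ)
  ⟨fun r a y => by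
    change (r • a) • y = (inl r : DualNumber Λ) • a • y
    rw [← mul_smul, inl_mul_eq_smul]⟩

namespace Induced

variable {Λ : Type*} [Ring Λ] {M N : Type*} [AddCommGroup M] [Module Λ M]
  [AddCommGroup N] [Module Λ N]

theorem map_injective {f : M →ₗ[Λ] N} (hf : Function.Injective f) :
    Function.Injective (map f) :=
  hf.prodMap hf

theorem map_surjective {f : M →ₗ[Λ] N} (hf : Function.Surjective f) :
    Function.Surjective (map f) :=
  hf.prodMap hf

theorem map_exact {P : Type*} [AddCommGroup P] [Module Λ P] {f : M →ₗ[Λ] N} {g : N →ₗ[Λ] P}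
    (hfg : Function.Exact f g) : Function.Exact (map f) (map g) :=
  hfg.prodMap hfg

theorem eps_smul (z : Induced Λ M) : (ε : DualNumber Λ) • z = ((0, z.1) : M × M) :=
  Prod.ext (by simp) (by simp)

section Lift

variable {Y : Type*} [AddCommGroup Y] [Module (DualNumber Λ) Y] [Module Λ Y]
  [IsScalarTower Λ (DualNumber Λ) Y]

def lift : (Y →ₗ[Λ] M) ≃ (Y →ₗ[DualNumber Λ] Induced Λ M) where
  toFun h :=
    { toFun y := ((h ((ε : DualNumber Λ) • y), h y) : M × M)
      map_add' y y' := by simp only [smul_add, map_add]; rfl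
      map_smul' a y := by
        change ((_, _) : M × M) = ((a.fst • _, a.snd • _ + a.fst • _) : M × M)
        simp [smul_eq_fst_smul_add_snd_smul_eps a y, eps_smul_smul, smul_smul, eps_mul_eps,
          add_comm] }
  invFun g :=
    { toFun y := (g y).2
      map_add' y y' := by rw [map_add]; rfl
      map_smul' r y := by simp [← inl_smul_eq, map_smul] }
  left_inv h := rfl
  right_inv g := LinearMap.ext fun y => Prod.ext (by
    change (g ((ε : DualNumber Λ) • y)).2 = (g y).1
    rw [map_smul, eps_smul]) rfl

theorem lift_comp {X : Type*} [AddCommGroup X] [Module (DualNumber Λ) X] [Module Λ X]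
    [IsScalarTower Λ (DualNumber Λ) X] (h : Y →ₗ[Λ] M) (f : X →ₗ[DualNumber Λ] Y) :
    lift (h ∘ₗ f.restrictScalars Λ) = lift h ∘ₗ f := by
  refine LinearMap.ext fun x => Prod.ext ?_ rfl
  change h (f _) = h _
  rw [map_smul]

end Lift

theorem _root_.Module.Injective.induced {I : Type*} [AddCommGroup I] [Module Λ I]
    (hI : Module.Injective Λ I) : Module.Injective (DualNumber Λ) (Induced Λ I) := by
  refine ⟨fun X Y _ _ _ _ f hf g => ?_⟩
  let := Module.compHom X (inlHom Λ Λ)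
  let := Module.compHom Y (inlHom Λ Λ)
  have := isScalarTower_compHom_inl Λ X
  have := isScalarTower_compHom_inl Λ Y
  obtain ⟨h, hh⟩ := hI.out (f.restrictScalars Λ) hf (lift.symm g)
  have hext : h ∘ₗ f.restrictScalars Λ = lift.symm g := LinearMap.ext hh
  refine ⟨lift h, fun x => ?_⟩
  rw [← LinearMap.comp_apply, ← lift_comp, hext, Equiv.apply_symm_apply]

variable (Λ) in
def of (m : M) : Induced Λ M := (m, 0)

theorem of_zero : of Λ (0 : M) = 0 := rfl

theorem of_add (m m' : M) : of Λ (m + m') = of Λ m + of Λ m' :=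
  Prod.ext rfl (add_zero 0).symm

theorem of_smul (r : Λ) (m : M) : of Λ (r • m) = (inl r : DualNumber Λ) • of Λ m :=
  Prod.ext rfl (show (0 : M) = (0 : Λ) • m + r • 0 by simp)

theorem of_fst_add_eps_smul_of_snd (z : Induced Λ M) :
    of Λ z.1 + (ε : DualNumber Λ) • of Λ z.2 = z := by
  rw [eps_smul]
  exact Prod.ext (add_zero _) (zero_add _)

theorem fst_apply (e : Module.End (DualNumber Λ) (Induced Λ M)) (z : Induced Λ M) :
    (e z).1 = (e (of Λ z.1)).1 := by
  conv_lhs => rw [← of_fst_add_eps_smul_of_snd z, map_add, map_smul, fst_add', eps_smul]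
  exact add_zero _

/-- The endomorphism induced on `M̃ / εM̃ ≅ M`. -/
def residue : Module.End (DualNumber Λ) (Induced Λ M) →+* Module.End Λ M where
  toFun e :=
    { toFun m := (e (of Λ m)).1
      map_add' m m' := by rw [of_add, map_add, fst_add']
      map_smul' r m := by rw [of_smul, map_smul]; rfl }
  map_one' := rfl
  map_mul' e e' := LinearMap.ext fun m => fst_apply e _
  map_zero' := rfl
  map_add' e e' := rfl

theorem mul_self_eq_zero_of_residue_eq_zero {e : Module.End (DualNumber Λ) (Induced Λ M)}
    (he : residue e = 0) : e * e = 0 := by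
  have hfst (z : Induced Λ M) : (e z).1 = 0 :=
    (fst_apply e z).trans (LinearMap.congr_fun he z.1)
  refine LinearMap.ext fun z => ?_
  rw [Module.End.mul_apply, ← of_fst_add_eps_smul_of_snd (e z), hfst, of_zero, zero_add, map_smul,
    eps_smul, hfst]
  rfl

theorem _root_.IsIndecomposableModule.induced (hM : IsIndecomposableModule Λ M) :
    IsIndecomposableModule (DualNumber Λ) (Induced Λ M) := by
  rw [isIndecomposableModule_iff] at hM ⊢
  obtain ⟨_, hM⟩ := hM
  refine ⟨inferInstanceAs (Nontrivial (M × M)), fun e he => ?_⟩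
  exact he.eq_zero_or_one_of_map residue (fun _ => mul_self_eq_zero_of_residue_eq_zero)
    (hM _ (he.map residue))

end Induced

theorem induction_functor_exact_preserves_injectives_general
    (Λ : Type) [Ring Λ] :
    (∀ (A B C : Type) [AddCommGroup A] [AddCommGroup B] [AddCommGroup C]
        [Module Λ A] [Module Λ B] [Module Λ C]
        [Module.Finite Λ A] [Module.Finite Λ B] [Module.Finite Λ C]
        (f : A →ₗ[Λ] B) (g : B →ₗ[Λ] C),
        Function.Injective f → Function.Surjective g → Function.Exact f g →
          Function.Injective (Induced.map f) ∧ Function.Surjective (Induced.map g) ∧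
            Function.Exact (Induced.map f) (Induced.map g)) ∧
    (∀ (I : Type) [AddCommGroup I] [Module Λ I] [Module.Finite Λ I],
        Module.Injective Λ I → Module.Injective (DualNumber Λ) (Induced Λ I)) ∧
    (∀ (I : Type) [AddCommGroup I] [Module Λ I] [Module.Finite Λ I],
        Module.Injective Λ I → IsIndecomposableModule Λ I →
          Module.Injective (DualNumber Λ) (Induced Λ I) ∧
            IsIndecomposableModule (DualNumber Λ) (Induced Λ I)) :=
  ⟨fun _ _ _ _ _ _ _ _ _ _ _ _ _ _ hf hg hfg =>
      ⟨Induced.map_injective hf, Induced.map_surjective hg, Induced.map_exact hfg⟩,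
    fun _ _ _ _ hI => hI.induced,
    fun _ _ _ _ hI hInd => ⟨hI.induced, hInd.induced⟩⟩

/-- Let `K` be a field, `Λ` a (basic) finite-dimensional `K`-algebra and
`Λ̃ = Λ ⊗_K K[ε]/(ε²)` (realized as the dual numbers over `Λ`).  The induction functor
`- ⊗_Λ Λ̃` from finitely generated `Λ`-modules to `Λ̃`-modules is exact (it sends short exact
sequences to short exact sequences), it sends injective `Λ`-modules to injective `Λ̃`-modules,
and it sends indecomposable injective `Λ`-modules to indecomposable injective `Λ̃`-modules. -/
theorem induction_functor_exact_preserves_injectives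
    (K : Type) [Field K] [IsAlgClosed K]
    (Λ : Type) [Ring Λ] [Algebra K Λ] [FiniteDimensional K Λ] :
    (∀ (A B C : Type) [AddCommGroup A] [AddCommGroup B] [AddCommGroup C]
        [Module Λ A] [Module Λ B] [Module Λ C]
        [Module.Finite Λ A] [Module.Finite Λ B] [Module.Finite Λ C]
        (f : A →ₗ[Λ] B) (g : B →ₗ[Λ] C),
        Function.Injective f → Function.Surjective g → Function.Exact f g →
          Function.Injective (Induced.map f) ∧ Function.Surjective (Induced.map g) ∧
            Function.Exact (Induced.map f) (Induced.map g)) ∧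
    (∀ (I : Type) [AddCommGroup I] [Module Λ I] [Module.Finite Λ I],
        Module.Injective Λ I → Module.Injective (DualNumber Λ) (Induced Λ I)) ∧
    (∀ (I : Type) [AddCommGroup I] [Module Λ I] [Module.Finite Λ I],
        Module.Injective Λ I → IsIndecomposableModule Λ I →
          Module.Injective (DualNumber Λ) (Induced Λ I) ∧
            IsIndecomposableModule (DualNumber Λ) (Induced Λ I)) :=
  induction_functor_exact_preserves_injectives_general Λ
end

section
/- Let K be an algebraically closed field, Λ = KQ/I a Jacobian algebra arising from a triangulation (with no internal triangles) of a polygon, M an indecomposable Λ-module (so dim_K M_i ≤ 1 at every vertex i of Q), and M̃ = M ⊗_K K[ε]/(ε²) the induced representation over Λ̃ = Λ ⊗_K K[ε]/(ε²). Then for every dimension vector e, M̃ has at most one subrepresentation of dimension vector e; consequently every nonempty quiver Grassmannian Gr_e(M̃) is a single reduced point and (for K = ℂ) its Euler–Poincaré characteristic χ(Gr_e(M̃)) equals 1. -/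
namespace StringRep

variable (K : Type*) [Field K]

/-- The action of `ε` on `K²`: the nilpotent Jordan block `[[0,0],[1,0]]`. -/
def eps (v : K × K) : K × K := (0, v.1)

/-- A subrepresentation of the induced representation `M̃ = M ⊗_K K[ε]/(ε²)` of the
string module `M` whose underlying string has arrow list `a` (`a.getD i` is the arrow
between the `i`-th and `(i+1)`-st vertices, `true` = direct, pointing from `i` to `i+1`).
`M̃` has a copy of `K²` at each of the `a.length + 1` vertices in the support of `M`,
with `ε` acting by the nilpotent Jordan block and each arrow of `Q` acting by the natural
`2×2` extension (the identity) of its action on `M`.  A subrepresentation is a family of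
subspaces stable under `ε` and under the arrows. -/
def IsInducedSubrep (a : List Bool) (U : ℕ → Submodule K (K × K)) : Prop :=
  (∀ i, i ≤ a.length → ∀ v ∈ U i, eps K v ∈ U i) ∧
  (∀ i, i < a.length →
    (a.getD i false = true → U i ≤ U (i + 1)) ∧
    (a.getD i false = false → U (i + 1) ≤ U i)) ∧
  (∀ i, a.length < i → U i = ⊥)

/-- The dimension vector of a family of subspaces, viewed at the vertices of `Q` via the
labelling `ℓ` of the string vertices. -/
noncomputable def dimVec {V : Type*} [DecidableEq V] (a : List Bool) (ℓ : ℕ → V)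
    (U : ℕ → Submodule K (K × K)) (v : V) : ℕ :=
  ∑ i ∈ (Finset.range (a.length + 1)).filter (fun i => ℓ i = v), Module.finrank K (U i)

variable {K}

lemma eps_stable_classify (U : Submodule K (K × K))
    (hU : ∀ v ∈ U, eps K v ∈ U) :
    U = ⊥ ∨ U = Submodule.span K {((0:K),(1:K))} ∨ U = ⊤ := by
  by_cases h0 : U = ⊥
  · exact Or.inl h0
  right
  obtain ⟨w, hw, hw0⟩ := Submodule.ne_bot_iff U |>.1 h0
  by_cases h1 : ∀ v ∈ U, (v : K × K).1 = 0
  · left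
    have hw2 : w.2 ≠ 0 := by
      intro h
      exact hw0 (Prod.ext (h1 w hw) h)
    apply le_antisymm
    · intro x hx
      have hx1 := h1 x hx
      rw [Submodule.mem_span_singleton]
      exact ⟨x.2, by simp [Prod.ext_iff, hx1]⟩
    · rw [Submodule.span_singleton_le_iff_mem]
      have : ((0:K), (1:K)) = w.2⁻¹ • w := by
        simp [Prod.ext_iff, h1 w hw, inv_mul_cancel₀ hw2]
      rw [this]
      exact U.smul_mem _ hw
  · right
    push_neg at h1
    obtain ⟨v, hv, hv1⟩ := h1
    have h01 : ((0:K), (1:K)) ∈ U := by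
      have : ((0:K), (1:K)) = v.1⁻¹ • eps K v := by
        simp [eps, Prod.ext_iff, inv_mul_cancel₀ hv1]
      rw [this]
      exact U.smul_mem _ (hU v hv)
    have h10 : ((1:K), (0:K)) ∈ U := by
      have : ((1:K), (0:K)) = v.1⁻¹ • (v - v.2 • ((0:K), (1:K))) := by
        simp [Prod.ext_iff, inv_mul_cancel₀ hv1]
      rw [this]
      exact U.smul_mem _ (U.sub_mem hv (U.smul_mem _ h01))
    rw [eq_top_iff]
    intro x _
    have : x = x.1 • ((1:K),(0:K)) + x.2 • ((0:K),(1:K)) := by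
      simp [Prod.ext_iff]
    rw [this]
    exact U.add_mem (U.smul_mem _ h10) (U.smul_mem _ h01)

lemma finrank_span01 : Module.finrank K (Submodule.span K {((0:K),(1:K))}) = 1 :=
  finrank_span_singleton (by simp [Prod.ext_iff])

lemma eps_stable_eq_of_finrank (U U' : Submodule K (K × K))
    (hU : ∀ v ∈ U, eps K v ∈ U) (hU' : ∀ v ∈ U', eps K v ∈ U')
    (h : Module.finrank K U = Module.finrank K U') : U = U' := by
  have htop : Module.finrank K (⊤ : Submodule K (K × K)) = 2 := by
    rw [finrank_top]; simp
  have hbot : Module.finrank K (⊥ : Submodule K (K × K)) = 0 := finrank_bot K _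
  rcases eps_stable_classify U hU with h1 | h1 | h1 <;>
    rcases eps_stable_classify U' hU' with h2 | h2 | h2 <;>
      subst h1 <;> subst h2 <;>
        simp_all [finrank_span01]

end StringRep

open StringRep in
/-- Let `K` be an algebraically closed field, `Λ = KQ/I` a Jacobian
algebra of a triangulation (with no internal triangles) of a polygon, `M` an indecomposable
`Λ`-module — a string module with `dim_K M_i ≤ 1` at every vertex `i` of `Q`, so its string
(with arrow list `a`) visits pairwise distinct vertices `ℓ 0, …, ℓ n` of `Q` — and
`M̃ = M ⊗_K K[ε]/(ε²)` the induced representation over `Λ̃ = Λ ⊗_K K[ε]/(ε²)`.  Then for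
every dimension vector `e`, `M̃` has at most one subrepresentation of dimension vector `e`;
consequently every nonempty quiver Grassmannian `Gr_e(M̃)` is a single (reduced) point and
its Euler–Poincaré characteristic `χ(Gr_e(M̃))` equals `1`. -/
theorem induced_subrep_unique_of_dimVec
    (K : Type) [Field K] [IsAlgClosed K]
    (V : Type) [DecidableEq V] (a : List Bool) (ℓ : ℕ → V)
    (hinj : ∀ i ≤ a.length, ∀ j ≤ a.length, ℓ i = ℓ j → i = j) :
    (∀ U U' : ℕ → Submodule K (K × K),
      IsInducedSubrep K a U → IsInducedSubrep K a U' →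
        (∀ v : V, dimVec K a ℓ U v = dimVec K a ℓ U' v) → U = U') ∧
    (∀ e : V → ℕ,
      Nonempty {U : ℕ → Submodule K (K × K) //
          IsInducedSubrep K a U ∧ ∀ v : V, dimVec K a ℓ U v = e v} →
        Nat.card {U : ℕ → Submodule K (K × K) //
          IsInducedSubrep K a U ∧ ∀ v : V, dimVec K a ℓ U v = e v} = 1) := by
  have key : ∀ U U' : ℕ → Submodule K (K × K),
      IsInducedSubrep K a U → IsInducedSubrep K a U' →
        (∀ v : V, dimVec K a ℓ U v = dimVec K a ℓ U' v) → U = U' := by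
    intro U U' hU hU' hd
    funext i
    by_cases hi : i ≤ a.length
    · have hfilter : (Finset.range (a.length + 1)).filter (fun j => ℓ j = ℓ i)
          = {i} := by
        ext j
        simp only [Finset.mem_filter, Finset.mem_range, Finset.mem_singleton,
          Nat.lt_succ_iff]
        constructor
        · rintro ⟨hj, hji⟩
          exact hinj j hj i hi hji
        · rintro rfl
          exact ⟨hi, rfl⟩
      have hdi := hd (ℓ i)
      rw [dimVec, dimVec, hfilter, Finset.sum_singleton, Finset.sum_singleton] at hdi
      exact eps_stable_eq_of_finrank (U i) (U' i) (hU.1 i hi) (hU'.1 i hi) hdi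
    · push_neg at hi
      rw [hU.2.2 i hi, hU'.2.2 i hi]
  refine ⟨key, fun e hne => ?_⟩
  have : Subsingleton {U : ℕ → Submodule K (K × K) //
      IsInducedSubrep K a U ∧ ∀ v : V, dimVec K a ℓ U v = e v} := by
    constructor
    rintro ⟨U, hU, hdU⟩ ⟨U', hU', hdU'⟩
    exact Subtype.ext (key U U' hU hU' fun v => (hdU v).trans (hdU' v).symm)
  rw [Nat.card_eq_one_iff_unique]
  exact ⟨this, hne⟩
end
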